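/- arXiv:1708.09854 — 3 statements merged into one kernel-verified Lean document; each statement's English description precedes it below -/
import Mathlib

section
/- If f : X → X is not injective (or not surjective), then the sandwich semigroup (C(X,X), *_f) has no identity element: there is no e with e *_f g = g and g *_f e = g for all continuous g. -/
/-- The sandwich product `g₁ *_f g₂ = g₁ ∘ f ∘ g₂` on continuous self-maps. -/
def sandwich {X : Type*} [TopologicalSpace X] (f g₁ g₂ : C(X, X)) : C(X, X) :=
  g₁.comp (f.comp g₂)

section SandwichIdentity

variable {X : Type*} [TopologicalSpace X] {f e : C(X, X)}

theorem leftInverse_of_sandwich_left_id (he : sandwich f e (ContinuousMap.id X) = .id X) :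
    Function.LeftInverse e f :=
  fun x => DFunLike.congr_fun he x

theorem rightInverse_of_sandwich_right_id (he : sandwich f (ContinuousMap.id X) e = .id X) :
    Function.RightInverse e f :=
  fun x => DFunLike.congr_fun he x

theorem bijective_of_sandwich_identity
    (he : ∀ g : C(X, X), sandwich f e g = g ∧ sandwich f g e = g) : Function.Bijective f :=
  ⟨(leftInverse_of_sandwich_left_id (he (.id X)).1).injective,
    (rightInverse_of_sandwich_right_id (he (.id X)).2).surjective⟩

end SandwichIdentity

theorem sandwich_no_identity_general {X : Type*} [TopologicalSpace X]
    (f : C(X, X)) (hf : ¬ Function.Bijective f) :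
    ¬ ∃ e : C(X, X), ∀ g : C(X, X), sandwich f e g = g ∧ sandwich f g e = g :=
  fun ⟨_, he⟩ => hf (bijective_of_sandwich_identity he)

/-- if the continuous map `f : X → X` is not a bijection, then the
sandwich semigroup `(C(X,X), *_f)` has no identity element. -/
theorem sandwich_no_identity {X : Type*} [TopologicalSpace X] [Nontrivial X]
    (f : C(X, X)) (hf : ¬ Function.Bijective f) :
    ¬ ∃ e : C(X, X), ∀ g : C(X, X), sandwich f e g = g ∧ sandwich f g e = g :=
  sandwich_no_identity_general f hf
end

section
/- Let ρ : (Rat, *_{R₁}) → (Rat, *_{R₂}) be a sandwich-semigroup isomorphism between the sandwich semigroups of rational maps associated with nonconstant rational maps R₁, R₂. Then for every Möbius transformation M ∈ PSL(2,ℂ), the image ρ(M) is a rational map of degree 1, i.e., a Möbius transformation. -/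
open OnePoint

noncomputable section

/-- The Riemann sphere, modeled as the one-point compactification of `ℂ`. -/
local notation "ℂ∞" => OnePoint ℂ

/-- `F : ℂ∞ → ℂ∞` is a rational self-map of the Riemann sphere (constants,
including the constant `∞`, are allowed): `F` is continuous and is given away
from the poles by a quotient of polynomials. -/
def IsRatMap (F : OnePoint ℂ → OnePoint ℂ) : Prop :=
  Continuous F ∧
    ((∀ z, F z = (∞ : OnePoint ℂ)) ∨
      ∃ p q : Polynomial ℂ, q ≠ 0 ∧
        ∀ z : ℂ, q.eval z ≠ 0 →
          F (z : OnePoint ℂ) = (((p.eval z / q.eval z : ℂ)) : OnePoint ℂ))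

/-- A Möbius transformation: a rational homeomorphic self-equivalence of the
sphere with rational inverse (equivalently, an element of `PSL(2,ℂ)`). -/
def IsMobius (γ : OnePoint ℂ ≃ OnePoint ℂ) : Prop :=
  IsRatMap ⇑γ ∧ IsRatMap ⇑γ.symm

/-- The (topological) degree of a rational map, realized as the supremum of the
cardinalities of its fibers: for a nonconstant rational map every fiber is finite
of cardinality at most `d` and a generic fiber has exactly `d` points. -/
def sphDeg (F : OnePoint ℂ → OnePoint ℂ) : ℕ :=
  sSup {n : ℕ | ∃ y : OnePoint ℂ, ∃ s : Finset (OnePoint ℂ),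
    s.card = n ∧ ∀ z ∈ s, F z = y}

open Function Polynomial Set

/-!
Evaluating `ρ (N ∘ R₁ ∘ const x) = ρ N ∘ R₂ ∘ ρ (const x)` at a point gives
`ρ N (R₂ (f x)) = f (N (R₁ x))`, and likewise for the inverse isomorphism `ρ'` with `f⁻¹`.
For `N = id` the latter shows that `R₂ ∘ f = f ∘ E' ∘ R₁` with `E' = ρ' id` surjective. As
nonconstant rational maps are surjective, `ρ M ∘ (f ∘ E') = f ∘ M`, so `ρ M` is bijective.

A bijective rational map `p / q` in lowest terms has degree one: otherwise, for all but one `w`,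
the polynomial `p - w q` has degree at least two and, by injectivity, a single root, which is
then a root of the Wronskian of `p` and `q`. Distinct `w` give distinct roots, while the
Wronskian is a nonzero polynomial.
-/

theorem Polynomial.exists_forall_ne_le_natDegree_sub_C_mul {K : Type*} [Field K] {p q : K[X]}
    {n : ℕ} (hn : p.coeff n ≠ 0 ∨ q.coeff n ≠ 0) :
    ∃ w₀ : K, ∀ w ≠ w₀, n ≤ (p - C w * q).natDegree := by
  by_cases hq : q.coeff n = 0
  · refine ⟨0, fun w _ => le_natDegree_of_ne_zero ?_⟩
    simpa [hq] using hn
  · refine ⟨p.coeff n / q.coeff n, fun w hw => le_natDegree_of_ne_zero ?_⟩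
    rw [coeff_sub, coeff_C_mul, sub_ne_zero]
    rintro heq
    exact hw (by rw [heq, mul_div_cancel_right₀ _ hq])

theorem Polynomial.natDegree_eq_zero_of_natDegree_sub_C_mul_eq_zero {K : Type*} [Field K]
    {p q : K[X]} {w₁ w₂ : K} (hw : w₁ ≠ w₂) (h₁ : (p - C w₁ * q).natDegree = 0)
    (h₂ : (p - C w₂ * q).natDegree = 0) : p.natDegree = 0 ∧ q.natDegree = 0 := by
  have hq : q.natDegree = 0 := by
    have hdiff : C (w₂ - w₁) * q = (p - C w₁ * q) - (p - C w₂ * q) := by rw [C_sub]; ring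
    rw [← natDegree_C_mul (sub_ne_zero.2 hw.symm), hdiff]
    exact Nat.le_zero.1 ((natDegree_sub_le _ _).trans (by simp [h₁, h₂]))
  refine ⟨Nat.le_zero.1 ?_, hq⟩
  rw [← sub_add_cancel p (C w₁ * q)]
  exact (natDegree_add_le _ _).trans (by simp [h₁, hq ▸ natDegree_C_mul_le w₁ q])

theorem Polynomial.exists_isRoot_derivative_of_subsingleton {K : Type*} [Field K] [IsAlgClosed K]
    {r : K[X]} (hr : 2 ≤ r.natDegree) (h : {a | r.IsRoot a}.Subsingleton) :
    ∃ a, r.IsRoot a ∧ (derivative r).IsRoot a := by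
  classical
  have hr0 : r ≠ 0 := by rintro rfl; simp at hr
  have hcard : r.roots.card = r.natDegree := IsAlgClosed.card_roots_eq_natDegree
  obtain ⟨a, ha⟩ := Multiset.card_pos_iff_exists_mem.1 (by omega : 0 < r.roots.card)
  have hroots : r.roots = Multiset.replicate r.roots.card a :=
    Multiset.eq_replicate_card.2 fun b hb => h (isRoot_of_mem_roots hb) (isRoot_of_mem_roots ha)
  refine ⟨a, (one_lt_rootMultiplicity_iff_isRoot hr0).1 ?_⟩
  rw [← count_roots, hroots, Multiset.count_replicate_self]
  omega

theorem Polynomial.isRoot_wronskian_of_isRoot_sub_C_mul {R : Type*} [CommRing R] {p q : R[X]}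
    {w a : R} (h : (p - C w * q).IsRoot a) (h' : (derivative (p - C w * q)).IsRoot a) :
    (wronskian p q).IsRoot a := by
  simp only [IsRoot, eval_sub, eval_mul, eval_C, derivative_sub, derivative_C_mul,
    sub_eq_zero] at h h'
  simp only [IsRoot, wronskian, eval_sub, eval_mul, h, h']
  ring

theorem Polynomial.wronskian_C_mul_X_add_C {R : Type*} [CommRing R] (a b c e : R) :
    wronskian (C a * X + C b) (C c * X + C e) = C (b * c - a * e) := by
  simp only [wronskian, derivative_add, derivative_C_mul_X, derivative_C, add_zero, map_sub,
    map_mul]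
  ring

section Sandwich

variable {α : Type*} {P : (α → α) → Prop} {R₁ R₂ f : α → α} {ρ ρ' : (α → α) → α → α}

theorem sandwich_apply_eq (hconst : ∀ c, P (const α c))
    (hhom : ∀ R Q, P R → P Q → ρ (R ∘ R₁ ∘ Q) = ρ R ∘ R₂ ∘ ρ Q)
    (hρconst : ∀ x, ρ (const α x) = const α (f x)) {N : α → α} (hN : P N) (x : α) :
    ρ N (R₂ (f x)) = f (N (R₁ x)) := by
  simpa [hρconst] using (congrFun (hhom N (const α x) hN (hconst x)) x).symm

theorem bijective_sandwich_image (hconst : ∀ c, P (const α c)) (hid : P id)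
    (hR₁ : Surjective R₁) (hR₂ : Surjective R₂) (hf : Bijective f)
    (hinv : ∀ R, P R → ρ' (ρ R) = R)
    (hhom : ∀ R Q, P R → P Q → ρ (R ∘ R₁ ∘ Q) = ρ R ∘ R₂ ∘ ρ Q)
    (hhom' : ∀ R Q, P R → P Q → ρ' (R ∘ R₂ ∘ Q) = ρ' R ∘ R₁ ∘ ρ' Q)
    (hρconst : ∀ x, ρ (const α x) = const α (f x)) {N : α → α} (hN : P N)
    (hNbij : Bijective N) : Bijective (ρ N) := by
  set e := Equiv.ofBijective f hf
  have hρ'const (y : α) : ρ' (const α y) = const α (e.symm y) := by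
    conv_lhs => rw [← e.apply_symm_apply y, Equiv.ofBijective_apply, ← hρconst]
    exact hinv _ (hconst _)
  set E' := ρ' id
  have hE' (y : α) : E' (R₁ (e.symm y)) = e.symm (R₂ y) :=
    sandwich_apply_eq hconst hhom' hρ'const hid y
  -- `R₂ ∘ f` factors through `R₁`, which is what makes `ρ N` injective
  have hfactor (x : α) : R₂ (f x) = f (E' (R₁ x)) := by
    have := congrArg e (hE' (f x))
    rw [e.apply_symm_apply, Equiv.ofBijective_symm_apply_apply] at this
    exact this.symm
  have hkey : ρ N ∘ (f ∘ E') = f ∘ N := funext fun u => by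
    obtain ⟨x, rfl⟩ := hR₁ u
    simp [← hfactor, sandwich_apply_eq hconst hhom hρconst hN]
  have hsurj : Surjective (f ∘ E') := by
    have hcomp : E' ∘ (R₁ ∘ e.symm) = e.symm ∘ R₂ := funext hE'
    exact hf.2.comp (Surjective.of_comp (hcomp ▸ e.symm.surjective.comp hR₂))
  exact ⟨(hkey ▸ hf.1.comp hNbij.1).of_comp_right hsurj, (hkey ▸ hf.2.comp hNbij.2).of_comp⟩

end Sandwich

def IsRatRep (F : ℂ∞ → ℂ∞) (p q : ℂ[X]) : Prop :=
  ∀ z : ℂ, q.eval z ≠ 0 → F z = ((p.eval z / q.eval z : ℂ) : ℂ∞)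

theorem isRatMap_const (c : ℂ∞) : IsRatMap (const ℂ∞ c) := by
  refine ⟨continuous_const, ?_⟩
  cases c with
  | infty => exact Or.inl fun _ => rfl
  | coe w => exact Or.inr ⟨C w, 1, one_ne_zero, fun z _ => by simp⟩

theorem isRatMap_id : IsRatMap id :=
  ⟨continuous_id, Or.inr ⟨X, 1, one_ne_zero, fun z _ => by simp⟩⟩

theorem eq_const_of_continuous_of_forall_coe {F : ℂ∞ → ℂ∞} (hF : Continuous F)
    {c : ℂ∞} (h : ∀ z : ℂ, F z = c) : F = const ℂ∞ c :=
  hF.ext_on denseRange_coe continuous_const (by rintro _ ⟨z, rfl⟩; exact h z)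

namespace IsRatRep

variable {F : ℂ∞ → ℂ∞} {p q : ℂ[X]}

theorem exists_isCoprime (hF : Continuous F) (hq : q ≠ 0) (h : IsRatRep F p q) :
    ∃ p' q' : ℂ[X], IsCoprime p' q' ∧ q' ≠ 0 ∧ IsRatRep F p' q' := by
  set g := gcd p q
  have hg : g ≠ 0 := gcd_ne_zero_of_right hq
  obtain ⟨p', hp⟩ : g ∣ p := gcd_dvd_left p q
  obtain ⟨q', hq'⟩ : g ∣ q := gcd_dvd_right p q
  have hcop : IsCoprime (p / g) (q / g) := isCoprime_div_gcd_div_gcd hq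
  rw [hp, hq', mul_div_cancel_left₀ _ hg, mul_div_cancel_left₀ _ hg] at hcop
  refine ⟨p', q', hcop, right_ne_zero_of_mul (hq' ▸ hq), fun z hz => ?_⟩
  -- both sides are continuous where `q' ≠ 0` and agree on the dense set where `q ≠ 0`
  have hcont : ContinuousOn (fun z : ℂ => ((p'.eval z / q'.eval z : ℂ) : ℂ∞))
      {z | q'.eval z ≠ 0} :=
    continuous_coe.comp_continuousOn
      (p'.continuous.continuousOn.div q'.continuous.continuousOn fun _ h => h)
  refine Set.EqOn.of_subset_closure (s := {z | q.eval z ≠ 0}) (fun z hz => ?_)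
    (hF.comp continuous_coe).continuousOn hcont (fun z hz => ?_)
    (fun z _ => (finite_setOfPred_isRoot hq).countable.dense_compl ℂ z) hz
  · have hz' : g.eval z * q'.eval z ≠ 0 := by rw [← eval_mul, ← hq']; exact hz
    rw [comp_apply, h z hz, hp, hq', eval_mul, eval_mul,
      mul_div_mul_left _ _ (left_ne_zero_of_mul hz')]
  · exact right_ne_zero_of_mul (by rwa [← eval_mul, ← hq'])

theorem apply_eq_of_isRoot (hcop : IsCoprime p q) (h : IsRatRep F p q) {w z : ℂ}
    (hz : (p - C w * q).IsRoot z) : F z = w := by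
  have hpz : p.eval z = w * q.eval z := by simpa [sub_eq_zero] using hz
  have hqz : q.eval z ≠ 0 := fun h0 => by
    simpa [hpz, h0] using hcop.map (evalRingHom z)
  rw [h z hqz, hpz, mul_div_cancel_right₀ _ hqz]

theorem apply_eq_apply_zero (hq : q ≠ 0) (hp0 : p.natDegree = 0) (hq0 : q.natDegree = 0)
    (h : IsRatRep F p q) (z : ℂ) : F z = F (0 : ℂ) := by
  obtain ⟨a, rfl⟩ := natDegree_eq_zero.1 hp0
  obtain ⟨b, rfl⟩ := natDegree_eq_zero.1 hq0
  have hb : b ≠ 0 := by simpa using hq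
  rw [h z (by simpa using hb), h 0 (by simpa using hb)]
  simp

theorem wronskian_ne_zero (hinj : Injective F) (hcop : IsCoprime p q) (hq : q ≠ 0)
    (h : IsRatRep F p q) : wronskian p q ≠ 0 := by
  rw [Ne, hcop.wronskian_eq_zero_iff, derivative_eq_zero, derivative_eq_zero]
  rintro ⟨hp0, hq0⟩
  exact one_ne_zero (coe_injective (hinj (h.apply_eq_apply_zero hq hp0 hq0 1)))

theorem natDegree_le_one (hinj : Injective F) (hcop : IsCoprime p q) (hq : q ≠ 0)
    (h : IsRatRep F p q) : p.natDegree ≤ 1 ∧ q.natDegree ≤ 1 := by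
  by_contra! hdeg
  obtain ⟨n, hn, hcoeff⟩ : ∃ n, 2 ≤ n ∧ (p.coeff n ≠ 0 ∨ q.coeff n ≠ 0) := by
    rcases le_or_gt p.natDegree 1 with hp | hp
    · exact ⟨q.natDegree, hdeg hp, Or.inr (leadingCoeff_ne_zero.2 hq)⟩
    · exact ⟨p.natDegree, hp, Or.inl (leadingCoeff_ne_zero.2 (ne_zero_of_natDegree_gt hp))⟩
  obtain ⟨w₀, hw₀⟩ := exists_forall_ne_le_natDegree_sub_C_mul hcoeff
  -- by injectivity `p - w q` has a single root, which is multiple, hence a root of the Wronskian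
  have hval (w : ℂ) (hw : w ≠ w₀) :
      (w : ℂ∞) ∈ (F ∘ (↑)) '' {a | (wronskian p q).IsRoot a} := by
    obtain ⟨a, ha, ha'⟩ := exists_isRoot_derivative_of_subsingleton (hn.trans (hw₀ w hw))
      fun a ha b hb => coe_injective <| hinj <|
        (h.apply_eq_of_isRoot hcop ha).trans (h.apply_eq_of_isRoot hcop hb).symm
    exact ⟨a, isRoot_wronskian_of_isRoot_sub_C_mul ha ha', h.apply_eq_of_isRoot hcop ha⟩
  have hfin : ((↑) ⁻¹' ((F ∘ (↑)) '' {a | (wronskian p q).IsRoot a}) : Set ℂ).Finite :=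
    ((finite_setOfPred_isRoot (h.wronskian_ne_zero hinj hcop hq)).image _).preimage
      coe_injective.injOn
  exact (finite_singleton w₀).infinite_compl (hfin.subset hval)

theorem isRatMap_symm {N : ℂ∞ ≃ ℂ∞} (hN : Continuous N) {a b c e : ℂ}
    (hdet : b * c - a * e ≠ 0) (h : IsRatRep N (C a * X + C b) (C c * X + C e)) :
    IsRatMap N.symm := by
  refine ⟨(hN.homeoOfEquivCompactToT2 (f := N)).symm.continuous,
    Or.inr ⟨C e * X - C b, -C c * X + C a, fun h0 => hdet ?_, fun z hz => ?_⟩⟩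
  · have hc : c = 0 := by simpa using congrArg (coeff · 1) h0
    have ha : a = 0 := by simpa using congrArg (coeff · 0) h0
    simp [ha, hc]
  simp only [eval_add, eval_sub, eval_mul, eval_C, eval_X, eval_neg] at hz ⊢
  rw [show -c * z + a = a - c * z by ring] at hz ⊢
  set w := (e * z - b) / (a - c * z)
  have hwz : w * (a - c * z) = e * z - b := div_mul_cancel₀ _ hz
  have hw : c * w + e = (a * e - b * c) / (a - c * z) := by
    rw [eq_div_iff hz]; linear_combination c * hwz
  have hw₀ : c * w + e ≠ 0 := by
    rw [hw]; exact div_ne_zero (fun h0 => hdet (by linear_combination -h0)) hz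
  have haw : a * w + b = z * (c * w + e) := by
    linear_combination hwz
  rw [Equiv.symm_apply_eq, h _ (by simpa using hw₀)]
  simp only [eval_add, eval_mul, eval_C, eval_X, haw, mul_div_cancel_right₀ _ hw₀]

end IsRatRep

theorem IsRatMap.surjective {F : ℂ∞ → ℂ∞} (hF : IsRatMap F)
    (hnc : ¬∃ c, F = const ℂ∞ c) : Surjective F := by
  obtain ⟨hcont, hinf | ⟨p₀, q₀, hq₀, h₀⟩⟩ := hF
  · exact absurd ⟨∞, funext hinf⟩ hnc
  obtain ⟨p, q, hcop, hq, h⟩ := IsRatRep.exists_isCoprime hcont hq₀ h₀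
  have hhit (w : ℂ) (hw : 0 < (p - C w * q).natDegree) : (w : ℂ∞) ∈ range F :=
    let ⟨z, hz⟩ := Complex.exists_root (natDegree_pos_iff_degree_pos.1 hw)
    ⟨z, h.apply_eq_of_isRoot hcop hz⟩
  -- `p - w q` is constant for at most one `w`, else `p` and `q` are constant
  obtain ⟨w₀, hw₀⟩ : ∃ w₀ : ℂ, ∀ w ≠ w₀, 0 < (p - C w * q).natDegree := by
    by_contra! hmiss
    obtain ⟨w₁, -, h₁⟩ := hmiss 0
    obtain ⟨w₂, hw, h₂⟩ := hmiss w₁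
    obtain ⟨hp0, hq0⟩ :=
      natDegree_eq_zero_of_natDegree_sub_C_mul_eq_zero hw (Nat.le_zero.1 h₂) (Nat.le_zero.1 h₁)
    exact hnc ⟨F (0 : ℂ),
      eq_const_of_continuous_of_forall_coe hcont (h.apply_eq_apply_zero hq hp0 hq0)⟩
  -- the range is closed and contains the dense set `ℂ \ {w₀}`
  have hdense : Dense (range F) :=
    (denseRange_coe.dense_image continuous_coe (dense_compl_singleton w₀)).mono
      (by rintro _ ⟨w, hw, rfl⟩; exact hhit w (hw₀ w hw))
  rw [← range_eq_univ, ← (isCompact_range hcont).isClosed.closure_eq, hdense.closure_eq]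

theorem IsRatMap.exists_isMobius_of_bijective {F : ℂ∞ → ℂ∞} (hF : IsRatMap F)
    (hbij : Bijective F) : ∃ N : ℂ∞ ≃ ℂ∞, IsMobius N ∧ F = N := by
  obtain ⟨hcont, hinf | ⟨p₀, q₀, hq₀, h₀⟩⟩ := id hF
  · exact absurd (hbij.1 ((hinf (0 : ℂ)).trans (hinf (1 : ℂ)).symm)) (by simp)
  obtain ⟨p, q, hcop, hq, h⟩ := IsRatRep.exists_isCoprime hcont hq₀ h₀
  obtain ⟨hp1, hq1⟩ := h.natDegree_le_one hbij.1 hcop hq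
  have hW := h.wronskian_ne_zero hbij.1 hcop hq
  rw [eq_X_add_C_of_natDegree_le_one hp1, eq_X_add_C_of_natDegree_le_one hq1] at h hW
  rw [wronskian_C_mul_X_add_C, Ne, C_eq_zero] at hW
  exact ⟨Equiv.ofBijective F hbij, ⟨hF, IsRatRep.isRatMap_symm hcont hW h⟩, rfl⟩

theorem sphDeg_eq_one_of_injective {F : ℂ∞ → ℂ∞} (hF : Injective F) :
    sphDeg F = 1 := by
  have hle : ∀ n ∈ {n | ∃ y, ∃ s : Finset ℂ∞, s.card = n ∧ ∀ z ∈ s, F z = y}, n ≤ 1 := by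
    rintro n ⟨y, s, rfl, hs⟩
    exact Finset.card_le_one.2 fun u hu v hv => hF ((hs u hu).trans (hs v hv).symm)
  exact le_antisymm (csSup_le ⟨1, F ∞, {∞}, by simp⟩ hle)
    (le_csSup ⟨1, hle⟩ ⟨F ∞, {∞}, by simp⟩)

theorem iso_image_of_mobius_is_mobius_general
    (R₁ R₂ : OnePoint ℂ → OnePoint ℂ) (hR₁ : IsRatMap R₁) (hR₂ : IsRatMap R₂)
    (hnc₁ : ¬ ∃ c : OnePoint ℂ, R₁ = Function.const (OnePoint ℂ) c)
    (hnc₂ : ¬ ∃ c : OnePoint ℂ, R₂ = Function.const (OnePoint ℂ) c)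
    (ρ ρ' : (OnePoint ℂ → OnePoint ℂ) → (OnePoint ℂ → OnePoint ℂ))
    (hρmaps : ∀ R, IsRatMap R → IsRatMap (ρ R))
    (hinv : ∀ R, IsRatMap R → ρ' (ρ R) = R)
    (hhom : ∀ R Q, IsRatMap R → IsRatMap Q → ρ (R ∘ R₁ ∘ Q) = ρ R ∘ R₂ ∘ ρ Q)
    (hhom' : ∀ R Q, IsRatMap R → IsRatMap Q → ρ' (R ∘ R₂ ∘ Q) = ρ' R ∘ R₁ ∘ ρ' Q)
    (f : OnePoint ℂ → OnePoint ℂ) (hf : Function.Bijective f)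
    (hρconst : ∀ x : OnePoint ℂ,
      ρ (Function.const (OnePoint ℂ) x) = Function.const (OnePoint ℂ) (f x))
    (M : OnePoint ℂ ≃ OnePoint ℂ) (hM : IsMobius M) :
    IsRatMap (ρ ⇑M) ∧ sphDeg (ρ ⇑M) = 1 ∧
      ∃ N : OnePoint ℂ ≃ OnePoint ℂ, IsMobius N ∧ ρ ⇑M = ⇑N := by
  have hρM : IsRatMap (ρ M) := hρmaps _ hM.1
  have hbij : Bijective (ρ M) :=
    bijective_sandwich_image isRatMap_const isRatMap_id (hR₁.surjective hnc₁)
      (hR₂.surjective hnc₂) hf hinv hhom hhom' hρconst hM.1 M.bijective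
  exact ⟨hρM, sphDeg_eq_one_of_injective hbij.1, hρM.exists_isMobius_of_bijective hbij⟩

/-- if `ρ` is a sandwich-semigroup isomorphism
`(Rat, *_{R₁}) → (Rat, *_{R₂})` between the sandwich semigroups associated with
nonconstant rational maps `R₁, R₂` (its restriction to the constants being the
bijection `f` of `ℂ∞`), then for every Möbius transformation `M ∈ PSL(2,ℂ)` the
image `ρ(M)` is a rational map of degree `1`, i.e. a Möbius transformation. -/
theorem iso_image_of_mobius_is_mobius
    (R₁ R₂ : OnePoint ℂ → OnePoint ℂ) (hR₁ : IsRatMap R₁) (hR₂ : IsRatMap R₂)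
    (hnc₁ : ¬ ∃ c : OnePoint ℂ, R₁ = Function.const (OnePoint ℂ) c)
    (hnc₂ : ¬ ∃ c : OnePoint ℂ, R₂ = Function.const (OnePoint ℂ) c)
    (ρ ρ' : (OnePoint ℂ → OnePoint ℂ) → (OnePoint ℂ → OnePoint ℂ))
    (hρmaps : ∀ R, IsRatMap R → IsRatMap (ρ R))
    (hρ'maps : ∀ R, IsRatMap R → IsRatMap (ρ' R))
    (hinv : ∀ R, IsRatMap R → ρ' (ρ R) = R)
    (hinv' : ∀ R, IsRatMap R → ρ (ρ' R) = R)
    (hhom : ∀ R Q, IsRatMap R → IsRatMap Q → ρ (R ∘ R₁ ∘ Q) = ρ R ∘ R₂ ∘ ρ Q)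
    (hhom' : ∀ R Q, IsRatMap R → IsRatMap Q → ρ' (R ∘ R₂ ∘ Q) = ρ' R ∘ R₁ ∘ ρ' Q)
    (f : OnePoint ℂ → OnePoint ℂ) (hf : Function.Bijective f)
    (hρconst : ∀ x : OnePoint ℂ,
      ρ (Function.const (OnePoint ℂ) x) = Function.const (OnePoint ℂ) (f x))
    (M : OnePoint ℂ ≃ OnePoint ℂ) (hM : IsMobius M) :
    IsRatMap (ρ ⇑M) ∧ sphDeg (ρ ⇑M) = 1 ∧
      ∃ N : OnePoint ℂ ≃ OnePoint ℂ, IsMobius N ∧ ρ ⇑M = ⇑N :=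
  iso_image_of_mobius_is_mobius_general R₁ R₂ hR₁ hR₂ hnc₁ hnc₂ ρ ρ' hρmaps hinv hhom hhom' f hf
    hρconst M hM
end
end

section
/- For any two sequences (τ₁,…,τ_{d−1}) and (σ₁,…,σ_{d−1}) of transpositions in S_d, each generating a transitive subgroup and each with product a d-cycle, there exists a sequence of Hurwitz moves (braid moves: replace (τ_i, τ_{i+1}) by (τ_{i+1}, τ_{i+1}⁻¹τ_iτ_{i+1})) and a simultaneous conjugation taking one sequence to the other. -/
/-- An elementary Hurwitz (braid) move on a tuple of permutations: replace the
adjacent pair `(τ_i, τ_{i+1})` by `(τ_{i+1}, τ_{i+1}⁻¹ τ_i τ_{i+1})`, leaving all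
other entries unchanged. -/
def HurwitzMove {d k : ℕ} (τ σ : Fin k → Equiv.Perm (Fin d)) : Prop :=
  ∃ i : ℕ, ∃ hi : i + 1 < k,
    σ ⟨i, Nat.lt_of_succ_lt hi⟩ = τ ⟨i + 1, hi⟩ ∧
    σ ⟨i + 1, hi⟩ =
      (τ ⟨i + 1, hi⟩)⁻¹ * τ ⟨i, Nat.lt_of_succ_lt hi⟩ * τ ⟨i + 1, hi⟩ ∧
    ∀ j : Fin k, (j : ℕ) ≠ i → (j : ℕ) ≠ i + 1 → σ j = τ j

/-- Simultaneous conjugation of a tuple of permutations by one permutation. -/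
def ConjMove {d k : ℕ} (τ σ : Fin k → Equiv.Perm (Fin d)) : Prop :=
  ∃ g : Equiv.Perm (Fin d), ∀ j, σ j = g⁻¹ * τ j * g

namespace HurwitzAux

open Equiv Subgroup Relation

open Equiv Subgroup Relation

variable {d : ℕ}

theorem Equiv.Perm.apply_inv_self {α : Type*} (f : Equiv.Perm α) (x : α) : f (f⁻¹ x) = x :=
  Equiv.apply_symm_apply f x

theorem Equiv.Perm.inv_apply_self {α : Type*} (f : Equiv.Perm α) (x : α) : f⁻¹ (f x) = x :=
  Equiv.symm_apply_apply f x

/-- step relation on points induced by a set of permutations -/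
def SStep (S : Set (Equiv.Perm (Fin d))) (x y : Fin d) : Prop := ∃ e ∈ S, e x = y

/-- reachability -/
def SReach (S : Set (Equiv.Perm (Fin d))) : Fin d → Fin d → Prop :=
  Relation.ReflTransGen (SStep S)

lemma swap_inv_eq {e : Equiv.Perm (Fin d)} (h : e.IsSwap) : e⁻¹ = e := by
  obtain ⟨x, y, -, rfl⟩ := h; exact Equiv.swap_inv x y

lemma swap_sq {e : Equiv.Perm (Fin d)} (h : e.IsSwap) (x : Fin d) :
    e (e x) = x := by
  obtain ⟨a, b, -, rfl⟩ := h; exact Equiv.swap_apply_self a b x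

lemma eq_swap_apply {e : Equiv.Perm (Fin d)} (h : e.IsSwap) {m : Fin d}
    (hm : e m ≠ m) : e = Equiv.swap (e m) m := by
  obtain ⟨a, b, hab, rfl⟩ := h
  rcases Equiv.swap_apply_def a b m with _
  by_cases h1 : m = a
  · subst h1; rw [Equiv.swap_apply_left, Equiv.swap_comm]
  by_cases h2 : m = b
  · subst h2; rw [Equiv.swap_apply_right]
  · exact absurd (Equiv.swap_apply_of_ne_of_ne h1 h2) hm

lemma sstep_symm {S : Set (Equiv.Perm (Fin d))} (hS : ∀ e ∈ S, e.IsSwap)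
    {x y : Fin d} (h : SStep S x y) : SStep S y x := by
  obtain ⟨e, he, rfl⟩ := h
  exact ⟨e, he, swap_sq (hS e he) x⟩

lemma sreach_symm {S : Set (Equiv.Perm (Fin d))} (hS : ∀ e ∈ S, e.IsSwap)
    {x y : Fin d} (h : SReach S x y) : SReach S y x :=
  haveI : Std.Symm (SStep S) := ⟨fun _ _ h' => sstep_symm hS h'⟩
  (Relation.ReflTransGen.symmetric (r := SStep S)).symm _ _ h

lemma sreach_of_mem_closure {S : Set (Equiv.Perm (Fin d))} (hS : ∀ e ∈ S, e.IsSwap)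
    {g : Equiv.Perm (Fin d)} (hg : g ∈ Subgroup.closure S) (x : Fin d) :
    SReach S x (g x) := by
  induction hg using Subgroup.closure_induction generalizing x with
  | mem e he => exact Relation.ReflTransGen.single ⟨e, he, rfl⟩
  | one => simpa [SReach] using Relation.ReflTransGen.refl
  | mul a b _ _ ha hb =>
      have : (a * b) x = a (b x) := rfl
      rw [this]
      exact (hb x).trans (ha (b x))
  | inv a _ ha =>
      have := ha (a⁻¹ x)
      rw [Equiv.Perm.apply_inv_self] at this
      exact sreach_symm hS this

/-- if every generator moves points only by SReach T steps, SReach S implies SReach T -/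
lemma sreach_mono_sim {S T : Set (Equiv.Perm (Fin d))}
    (h : ∀ e ∈ S, ∀ x : Fin d, SReach T x (e x)) {x y : Fin d}
    (hxy : SReach S x y) : SReach T x y := by
  induction hxy with
  | refl => exact Relation.ReflTransGen.refl
  | tail _ hstep ih =>
      obtain ⟨e, he, rfl⟩ := hstep
      exact ih.trans (h e he _)

lemma sreach_mono {S T : Set (Equiv.Perm (Fin d))} (h : S ⊆ T) {x y : Fin d}
    (hxy : SReach S x y) : SReach T x y :=
  sreach_mono_sim (fun e he x => Relation.ReflTransGen.single ⟨e, h he, rfl⟩) hxy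

lemma sreach_fix {S : Set (Equiv.Perm (Fin d))} {m : Fin d}
    (h : ∀ e ∈ S, e m = m) {y : Fin d} (hy : SReach S m y) : y = m := by
  induction hy with
  | refl => rfl
  | tail _ hstep ih =>
      obtain ⟨e, he, rfl⟩ := hstep
      rw [ih, h e he]

/-- splicing out the unique generator moving `m` -/
lemma sreach_splice {S : Set (Equiv.Perm (Fin d))} {a m : Fin d} (ham : a ≠ m)
    (hfix : ∀ f ∈ S, f m = m) {x y : Fin d}
    (h : SReach (insert (Equiv.swap a m) S) x y) :
    SReach S (if x = m then a else x) (if y = m then a else y) := by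
  induction h with
  | refl => exact Relation.ReflTransGen.refl
  | @tail b c hchain hstep ih =>
      obtain ⟨e, he, rfl⟩ := hstep
      refine ih.trans ?_
      rcases Set.mem_insert_iff.mp he with rfl | heS
      · by_cases hb : b = m
        · subst hb
          rw [if_pos rfl, Equiv.swap_apply_right, if_neg ham]
        by_cases hba : b = a
        · subst hba
          rw [if_neg hb, Equiv.swap_apply_left, if_pos rfl]
        · rw [if_neg hb, Equiv.swap_apply_of_ne_of_ne hba hb, if_neg hb]
      · by_cases hb : b = m
        · subst hb
          rw [hfix e heS, if_pos rfl]
        · have : e b ≠ m := fun hc => hb (e.injective (by rw [hc, hfix e heS]))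
          rw [if_neg hb, if_neg this]
          exact Relation.ReflTransGen.single ⟨e, heS, rfl⟩

lemma sreach_conj {S : Set (Equiv.Perm (Fin d))} (g : Equiv.Perm (Fin d)) {x y : Fin d}
    (h : SReach S x y) :
    SReach ((fun f => g⁻¹ * f * g) '' S) (g⁻¹ x) (g⁻¹ y) := by
  induction h with
  | refl => exact Relation.ReflTransGen.refl
  | tail _ hstep ih =>
      obtain ⟨e, he, rfl⟩ := hstep
      refine ih.trans (Relation.ReflTransGen.single ⟨g⁻¹ * e * g, ⟨e, he, rfl⟩, ?_⟩)
      simp [Equiv.Perm.mul_apply]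


variable {d : ℕ}

lemma sreach_empty {x y : Fin d} (h : SReach (∅ : Set (Equiv.Perm (Fin d))) x y) :
    x = y := by
  induction h with
  | refl => rfl
  | tail _ hstep ih => obtain ⟨e, he, rfl⟩ := hstep; exact absurd he (Set.notMem_empty e)

/-- adding one swap merges at most two components -/
lemma sreach_insert_cases {T : Set (Equiv.Perm (Fin d))} (hT : ∀ e ∈ T, e.IsSwap)
    {u v x y : Fin d}
    (h : SReach (insert (Equiv.swap u v) T) x y) :
    SReach T x y ∨ (SReach T x u ∧ SReach T v y) ∨ (SReach T x v ∧ SReach T u y) := by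
  induction h using Relation.ReflTransGen.head_induction_on with
  | refl => exact Or.inl Relation.ReflTransGen.refl
  | head hstep _ ih =>
      obtain ⟨e, he, rfl⟩ := hstep
      rename_i x' _
      rcases Set.mem_insert_iff.mp he with rfl | heT
      · by_cases hu : x' = u
        · subst hu
          rw [Equiv.swap_apply_left] at ih
          rcases ih with h1 | ⟨h2a, h2b⟩ | ⟨h3a, h3b⟩
          · exact Or.inr (Or.inl ⟨Relation.ReflTransGen.refl, h1⟩)
          · exact Or.inl (((sreach_symm hT h2a).trans h2b))
          · exact Or.inl h3b
        by_cases hv : x' = v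
        · subst hv
          rw [Equiv.swap_apply_right] at ih
          rcases ih with h1 | ⟨h2a, h2b⟩ | ⟨h3a, h3b⟩
          · exact Or.inr (Or.inr ⟨Relation.ReflTransGen.refl, h1⟩)
          · exact Or.inl h2b
          · exact Or.inl (((sreach_symm hT h3a).trans h3b))
        · rwa [Equiv.swap_apply_of_ne_of_ne hu hv] at ih
      · rcases ih with h1 | ⟨h2a, h2b⟩ | ⟨h3a, h3b⟩
        · exact Or.inl (Relation.ReflTransGen.head ⟨e, heT, rfl⟩ h1)
        · exact Or.inr (Or.inl ⟨Relation.ReflTransGen.head ⟨e, heT, rfl⟩ h2a, h2b⟩)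
        · exact Or.inr (Or.inr ⟨Relation.ReflTransGen.head ⟨e, heT, rfl⟩ h3a, h3b⟩)

/-- representatives lemma: there are at least `d - |T|` mutually unreachable points -/
lemma exists_reps (T : Finset (Equiv.Perm (Fin d))) (hT : ∀ e ∈ T, Equiv.Perm.IsSwap e) :
    ∃ reps : Finset (Fin d), d ≤ reps.card + T.card ∧
      ∀ r1 ∈ reps, ∀ r2 ∈ reps, SReach (↑T) r1 r2 → r1 = r2 := by
  classical
  induction T using Finset.induction_on with
  | empty =>
      refine ⟨Finset.univ, by simp, fun r1 _ r2 _ h => ?_⟩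
      simpa using sreach_empty (by simpa using h)
  | @insert e T he ih =>
      obtain ⟨reps, hcard, hpair⟩ := ih (fun f hf => hT f (Finset.mem_insert_of_mem hf))
      have hTT : ∀ f ∈ (↑T : Set (Equiv.Perm (Fin d))), Equiv.Perm.IsSwap f :=
        fun f hf => hT f (Finset.mem_insert_of_mem hf)
      obtain ⟨u, v, -, rfl⟩ := hT e (Finset.mem_insert_self e T)
      have hins : ((↑(insert (Equiv.swap u v) T) : Set (Equiv.Perm (Fin d))))
          = insert (Equiv.swap u v) (↑T) := by push_cast; rfl
      by_cases hru : ∃ r ∈ reps, SReach (↑T) r u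
      · obtain ⟨ru, hru_mem, hru_reach⟩ := hru
        refine ⟨reps.erase ru, ?_, ?_⟩
        · have h1 : reps.card ≤ (reps.erase ru).card + 1 := by
            rw [Finset.card_erase_of_mem hru_mem]; omega
          rw [Finset.card_insert_of_notMem he]; omega
        · intro r1 hr1 r2 hr2 hreach
          rw [hins] at hreach
          have hr1' := Finset.mem_of_mem_erase hr1
          have hr2' := Finset.mem_of_mem_erase hr2
          rcases sreach_insert_cases hTT hreach with h1 | ⟨h2a, h2b⟩ | ⟨h3a, h3b⟩
          · exact hpair r1 hr1' r2 hr2' h1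
          · exact absurd (hpair r1 hr1' ru hru_mem
              (h2a.trans (sreach_symm hTT hru_reach)))
              (Finset.ne_of_mem_erase hr1)
          · exact absurd (hpair r2 hr2' ru hru_mem
              ((sreach_symm hTT h3b).trans (sreach_symm hTT hru_reach)))
              (Finset.ne_of_mem_erase hr2)
      · push_neg at hru
        refine ⟨reps, ?_, ?_⟩
        · have := Finset.card_le_card (Finset.subset_insert (Equiv.swap u v) T)
          omega
        · intro r1 hr1 r2 hr2 hreach
          rw [hins] at hreach
          rcases sreach_insert_cases hTT hreach with h1 | ⟨h2a, h2b⟩ | ⟨h3a, h3b⟩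
          · exact hpair r1 hr1 r2 hr2 h1
          · exact absurd h2a (hru r1 hr1)
          · exact absurd ((sreach_symm hTT h3b)) (hru r2 hr2)

/-- main counting bound: a set on which a finite set of swaps acts transitively
has at most `|T| + 1` elements -/
lemma card_le_of_sreach_trans (T : Finset (Equiv.Perm (Fin d)))
    (hT : ∀ e ∈ T, Equiv.Perm.IsSwap e) (A : Finset (Fin d))
    (hA : ∀ x ∈ A, ∀ y ∈ A, SReach (↑T) x y) : A.card ≤ T.card + 1 := by
  classical
  obtain ⟨reps, hcard, hpair⟩ := exists_reps T hT
  have hinter : (A ∩ reps).card ≤ 1 := by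
    refine Finset.card_le_one.mpr fun a ha b hb => ?_
    obtain ⟨haA, haR⟩ := Finset.mem_inter.mp ha
    obtain ⟨hbA, hbR⟩ := Finset.mem_inter.mp hb
    exact hpair a haR b hbR (hA a haA b hbA)
  have hunion : (A ∪ reps).card + (A ∩ reps).card = A.card + reps.card :=
    Finset.card_union_add_card_inter A reps
  have hle : (A ∪ reps).card ≤ d := by
    have := Finset.card_le_card (Finset.subset_univ (A ∪ reps))
    simpa using this
  omega

lemma card_filter_lt (n m : ℕ) (h : m ≤ n) :
    ((Finset.univ : Finset (Fin n)).filter (fun i : Fin n => (i : ℕ) < m)).card = m := by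
  classical
  conv_rhs => rw [← Finset.card_range m]
  refine Finset.card_nbij (s := (Finset.univ : Finset (Fin n)).filter (fun i : Fin n => (i : ℕ) < m))
    (t := Finset.range m) (i := fun (a : Fin n) => (a : ℕ)) ?_ ?_ ?_
  · intro a ha
    simp only [Finset.mem_coe, Finset.mem_filter] at ha
    exact Finset.mem_range.mpr ha.2
  · intro a _ b _ hab
    exact Fin.val_injective hab
  · intro b hb
    simp only [Finset.mem_coe, Finset.mem_range] at hb
    refine ⟨⟨b, lt_of_lt_of_le hb h⟩, ?_, rfl⟩
    simp [hb]


/- ## Tuple-level machinery -/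

abbrev Tup (d : ℕ) := Fin (d - 1) → Equiv.Perm (Fin d)

def HRel (d : ℕ) (a b : Tup d) : Prop :=
  HurwitzMove a b ∨ HurwitzMove b a ∨ ConjMove a b

def Reach {d : ℕ} (τ σ : Tup d) : Prop := Relation.ReflTransGen (HRel d) τ σ

lemma hrel_symm : Symmetric (HRel d) := by
  intro a b h
  rcases h with h | h | ⟨g, hg⟩
  · exact Or.inr (Or.inl h)
  · exact Or.inl h
  · exact Or.inr (Or.inr ⟨g⁻¹, fun j => by rw [hg j]; group⟩)

lemma reach_symm {τ σ : Tup d} (h : Reach τ σ) : Reach σ τ :=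
  haveI : Std.Symm (HRel d) := ⟨fun _ _ h' => hrel_symm h'⟩
  (Relation.ReflTransGen.symmetric (r := HRel d)).symm _ _ h

def fwd (τ : Tup d) (i : ℕ) (hi : i + 1 < d - 1) : Tup d := fun j =>
  if (j : ℕ) = i then τ ⟨i + 1, hi⟩
  else if (j : ℕ) = i + 1 then
    (τ ⟨i + 1, hi⟩)⁻¹ * τ ⟨i, Nat.lt_of_succ_lt hi⟩ * τ ⟨i + 1, hi⟩
  else τ j

lemma fwd_left (τ : Tup d) (i : ℕ) (hi : i + 1 < d - 1) {j : Fin (d - 1)}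
    (hj : (j : ℕ) = i) : fwd τ i hi j = τ ⟨i + 1, hi⟩ := by
  simp only [fwd]; rw [if_pos hj]

lemma fwd_right (τ : Tup d) (i : ℕ) (hi : i + 1 < d - 1) {j : Fin (d - 1)}
    (hj : (j : ℕ) = i + 1) :
    fwd τ i hi j = (τ ⟨i + 1, hi⟩)⁻¹ * τ ⟨i, Nat.lt_of_succ_lt hi⟩ * τ ⟨i + 1, hi⟩ := by
  simp only [fwd]; rw [if_neg (by omega), if_pos hj]

lemma fwd_other (τ : Tup d) (i : ℕ) (hi : i + 1 < d - 1) {j : Fin (d - 1)}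
    (h1 : (j : ℕ) ≠ i) (h2 : (j : ℕ) ≠ i + 1) : fwd τ i hi j = τ j := by
  simp only [fwd]; rw [if_neg h1, if_neg h2]

lemma reach_fwd (τ : Tup d) (i : ℕ) (hi : i + 1 < d - 1) : Reach τ (fwd τ i hi) :=
  Relation.ReflTransGen.single (Or.inl ⟨i, hi, fwd_left τ i hi rfl, fwd_right τ i hi rfl,
    fun _ h1 h2 => fwd_other τ i hi h1 h2⟩)

def bwd (τ : Tup d) (i : ℕ) (hi : i + 1 < d - 1) : Tup d := fun j =>
  if (j : ℕ) = i then
    τ ⟨i, Nat.lt_of_succ_lt hi⟩ * τ ⟨i + 1, hi⟩ * (τ ⟨i, Nat.lt_of_succ_lt hi⟩)⁻¹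
  else if (j : ℕ) = i + 1 then τ ⟨i, Nat.lt_of_succ_lt hi⟩
  else τ j

lemma bwd_left (τ : Tup d) (i : ℕ) (hi : i + 1 < d - 1) {j : Fin (d - 1)}
    (hj : (j : ℕ) = i) :
    bwd τ i hi j = τ ⟨i, Nat.lt_of_succ_lt hi⟩ * τ ⟨i + 1, hi⟩ * (τ ⟨i, Nat.lt_of_succ_lt hi⟩)⁻¹ := by
  simp only [bwd]; rw [if_pos hj]

lemma bwd_right (τ : Tup d) (i : ℕ) (hi : i + 1 < d - 1) {j : Fin (d - 1)}
    (hj : (j : ℕ) = i + 1) : bwd τ i hi j = τ ⟨i, Nat.lt_of_succ_lt hi⟩ := by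
  simp only [bwd]; rw [if_neg (by omega), if_pos hj]

lemma bwd_other (τ : Tup d) (i : ℕ) (hi : i + 1 < d - 1) {j : Fin (d - 1)}
    (h1 : (j : ℕ) ≠ i) (h2 : (j : ℕ) ≠ i + 1) : bwd τ i hi j = τ j := by
  simp only [bwd]; rw [if_neg h1, if_neg h2]

lemma reach_bwd (τ : Tup d) (i : ℕ) (hi : i + 1 < d - 1) : Reach τ (bwd τ i hi) := by
  refine Relation.ReflTransGen.single (Or.inr (Or.inl ⟨i, hi, ?_, ?_, ?_⟩))
  · exact (bwd_right τ i hi rfl).symm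
  · rw [bwd_right τ i hi rfl, bwd_left τ i hi rfl]; group
  · exact fun j h1 h2 => (bwd_other τ i hi h1 h2).symm

lemma reach_conj (τ : Tup d) (g : Equiv.Perm (Fin d)) :
    Reach τ (fun j => g⁻¹ * τ j * g) :=
  Relation.ReflTransGen.single (Or.inr (Or.inr ⟨g, fun _ => rfl⟩))

def pimg (τ : Tup d) (m : ℕ) : Set (Equiv.Perm (Fin d)) :=
  τ '' {i : Fin (d - 1) | (i : ℕ) < m}

lemma mem_pimg {τ : Tup d} {m : ℕ} {i : Fin (d - 1)} (h : (i : ℕ) < m) :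
    τ i ∈ pimg τ m := ⟨i, h, rfl⟩

/-- The invariant: the first `m` entries are transpositions fixing everything above `m`,
the remaining entries are the standard chain, and the first `m` entries act transitively
on `{0, …, m}`. -/
structure Stage (d m : ℕ) (τ : Tup d) : Prop where
  isSwap : ∀ i : Fin (d - 1), (i : ℕ) < m → (τ i).IsSwap
  fix : ∀ i : Fin (d - 1), (i : ℕ) < m → ∀ x : Fin d, m < (x : ℕ) → τ i x = x
  suff : ∀ i : Fin (d - 1), m ≤ (i : ℕ) →
    τ i = Equiv.swap ⟨(i : ℕ), Nat.lt_of_lt_of_le i.isLt (Nat.sub_le d 1)⟩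
      ⟨(i : ℕ) + 1, by have := i.isLt; omega⟩
  trans : ∀ x y : Fin d, (x : ℕ) ≤ m → (y : ℕ) ≤ m → SReach (pimg τ m) x y

def std (d : ℕ) : Tup d := fun i =>
  Equiv.swap ⟨(i : ℕ), Nat.lt_of_lt_of_le i.isLt (Nat.sub_le d 1)⟩
    ⟨(i : ℕ) + 1, by have := i.isLt; omega⟩

def mset (τ : Tup d) (m : ℕ) (hmd : m < d) : Finset (Fin (d - 1)) :=
  Finset.univ.filter (fun i : Fin (d - 1) => (i : ℕ) < m ∧ τ i ⟨m, hmd⟩ ≠ ⟨m, hmd⟩)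

lemma mem_mset {τ : Tup d} {m : ℕ} {hmd : m < d} {i : Fin (d - 1)} :
    i ∈ mset τ m hmd ↔ (i : ℕ) < m ∧ τ i ⟨m, hmd⟩ ≠ ⟨m, hmd⟩ := by
  simp [mset]

lemma isSwap_conj {e g : Equiv.Perm (Fin d)} (he : e.IsSwap) :
    (g⁻¹ * e * g).IsSwap := by
  obtain ⟨x, y, hxy, rfl⟩ := he
  refine ⟨g⁻¹ x, g⁻¹ y, fun hc => hxy (g⁻¹.injective hc), ?_⟩
  rw [Equiv.swap_apply_apply, inv_inv]

lemma isSwap_conj' {e g : Equiv.Perm (Fin d)} (he : e.IsSwap) :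
    (g * e * g⁻¹).IsSwap := by
  have := isSwap_conj (g := g⁻¹) he
  rwa [inv_inv] at this

lemma trans_of_sim {τ σ : Tup d} {m : ℕ} (h : Stage d m τ)
    (hsim : ∀ i : Fin (d - 1), (i : ℕ) < m → ∀ x : Fin d, SReach (pimg σ m) x (τ i x)) :
    ∀ x y : Fin d, (x : ℕ) ≤ m → (y : ℕ) ≤ m → SReach (pimg σ m) x y := by
  intro x y hx hy
  refine sreach_mono_sim ?_ (h.trans x y hx hy)
  rintro e ⟨i, him, rfl⟩ x
  exact hsim i him x

lemma move_stage_fwd {m : ℕ} {τ : Tup d} (h : Stage d m τ) (p : ℕ) (hp : p + 1 < m)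
    (hmk : m ≤ d - 1) : Stage d m (fwd τ p (by omega)) := by
  have hi : p + 1 < d - 1 := by omega
  set B := τ ⟨p + 1, hi⟩ with hB
  have hBswap : B.IsSwap := h.isSwap _ hp
  have hpm : p < m := Nat.lt_of_succ_lt hp
  have hpswap : (τ ⟨p, Nat.lt_of_succ_lt hi⟩).IsSwap := h.isSwap _ hpm
  constructor
  · intro j hj
    by_cases h1 : (j : ℕ) = p
    · rw [fwd_left τ p hi h1]; exact hBswap
    by_cases h2 : (j : ℕ) = p + 1
    · rw [fwd_right τ p hi h2]; exact isSwap_conj hpswap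
    · rw [fwd_other τ p hi h1 h2]; exact h.isSwap j hj
  · intro j hj x hx
    by_cases h1 : (j : ℕ) = p
    · rw [fwd_left τ p hi h1]; exact h.fix _ hp x hx
    by_cases h2 : (j : ℕ) = p + 1
    · rw [fwd_right τ p hi h2]
      have hBx : B x = x := h.fix _ hp x hx
      have hpx : τ ⟨p, Nat.lt_of_succ_lt hi⟩ x = x := h.fix _ hpm x hx
      have hBix : B⁻¹ x = x := by
        conv_lhs => rw [← hBx]
        rw [Equiv.Perm.inv_apply_self]
      show (B⁻¹ * τ ⟨p, Nat.lt_of_succ_lt hi⟩ * B) x = x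
      rw [Equiv.Perm.mul_apply, Equiv.Perm.mul_apply, hBx, hpx, hBix]
    · rw [fwd_other τ p hi h1 h2]; exact h.fix j hj x hx
  · intro j hj
    have h1 : (j : ℕ) ≠ p := by omega
    have h2 : (j : ℕ) ≠ p + 1 := by omega
    rw [fwd_other τ p hi h1 h2]; exact h.suff j hj
  · refine trans_of_sim h ?_
    intro i him x
    have hBmem : B ∈ pimg (fwd τ p hi) m :=
      ⟨⟨p, Nat.lt_of_succ_lt hi⟩, hpm, fwd_left τ p hi rfl⟩
    have hCmem : (B⁻¹ * τ ⟨p, Nat.lt_of_succ_lt hi⟩ * B) ∈ pimg (fwd τ p hi) m :=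
      ⟨⟨p + 1, hi⟩, hp, fwd_right τ p hi rfl⟩
    by_cases h1 : (i : ℕ) = p
    · have hieq : i = ⟨p, Nat.lt_of_succ_lt hi⟩ := Fin.ext h1
      have key : τ i x = B ((B⁻¹ * τ ⟨p, Nat.lt_of_succ_lt hi⟩ * B) (B x)) := by
        rw [hieq]
        simp [Equiv.Perm.mul_apply, Equiv.Perm.apply_inv_self, swap_sq hBswap]
      rw [key]
      exact Relation.ReflTransGen.single ⟨B, hBmem, rfl⟩ |>.trans
        ((Relation.ReflTransGen.single ⟨_, hCmem, rfl⟩).trans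
          (Relation.ReflTransGen.single ⟨B, hBmem, rfl⟩))
    by_cases h2 : (i : ℕ) = p + 1
    · have hieq : i = ⟨p + 1, hi⟩ := Fin.ext h2
      rw [hieq]
      exact Relation.ReflTransGen.single ⟨B, hBmem, rfl⟩
    · exact Relation.ReflTransGen.single ⟨τ i, ⟨i, him, fwd_other τ p hi h1 h2⟩, rfl⟩

lemma move_stage_bwd {m : ℕ} {τ : Tup d} (h : Stage d m τ) (p : ℕ) (hp : p + 1 < m)
    (hmk : m ≤ d - 1) : Stage d m (bwd τ p (by omega)) := by
  have hi : p + 1 < d - 1 := by omega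
  set A := τ ⟨p, Nat.lt_of_succ_lt hi⟩ with hA
  have hpm : p < m := Nat.lt_of_succ_lt hp
  have hAswap : A.IsSwap := h.isSwap _ hpm
  have hqswap : (τ ⟨p + 1, hi⟩).IsSwap := h.isSwap _ hp
  constructor
  · intro j hj
    by_cases h1 : (j : ℕ) = p
    · rw [bwd_left τ p hi h1]; exact isSwap_conj' hqswap
    by_cases h2 : (j : ℕ) = p + 1
    · rw [bwd_right τ p hi h2]; exact hAswap
    · rw [bwd_other τ p hi h1 h2]; exact h.isSwap j hj
  · intro j hj x hx
    by_cases h1 : (j : ℕ) = p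
    · rw [bwd_left τ p hi h1]
      have hAx : A x = x := h.fix _ hpm x hx
      have hqx : τ ⟨p + 1, hi⟩ x = x := h.fix _ hp x hx
      have hAix : A⁻¹ x = x := by
        conv_lhs => rw [← hAx]
        rw [Equiv.Perm.inv_apply_self]
      show (A * τ ⟨p + 1, hi⟩ * A⁻¹) x = x
      rw [Equiv.Perm.mul_apply, Equiv.Perm.mul_apply, hAix, hqx, hAx]
    by_cases h2 : (j : ℕ) = p + 1
    · rw [bwd_right τ p hi h2]; exact h.fix _ hpm x hx
    · rw [bwd_other τ p hi h1 h2]; exact h.fix j hj x hx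
  · intro j hj
    have h1 : (j : ℕ) ≠ p := by omega
    have h2 : (j : ℕ) ≠ p + 1 := by omega
    rw [bwd_other τ p hi h1 h2]; exact h.suff j hj
  · refine trans_of_sim h ?_
    intro i him x
    have hAmem : A ∈ pimg (bwd τ p hi) m :=
      ⟨⟨p + 1, hi⟩, hp, bwd_right τ p hi rfl⟩
    have hCmem : (A * τ ⟨p + 1, hi⟩ * A⁻¹) ∈ pimg (bwd τ p hi) m :=
      ⟨⟨p, Nat.lt_of_succ_lt hi⟩, hpm, bwd_left τ p hi rfl⟩
    by_cases h1 : (i : ℕ) = p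
    · have hieq : i = ⟨p, Nat.lt_of_succ_lt hi⟩ := Fin.ext h1
      rw [hieq]
      exact Relation.ReflTransGen.single ⟨A, hAmem, rfl⟩
    by_cases h2 : (i : ℕ) = p + 1
    · have hieq : i = ⟨p + 1, hi⟩ := Fin.ext h2
      have key : τ i x = A ((A * τ ⟨p + 1, hi⟩ * A⁻¹) (A x)) := by
        rw [hieq]
        simp [Equiv.Perm.mul_apply, Equiv.Perm.inv_apply_self, swap_sq hAswap]
      rw [key]
      exact Relation.ReflTransGen.single ⟨A, hAmem, rfl⟩ |>.trans
        ((Relation.ReflTransGen.single ⟨_, hCmem, rfl⟩).trans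
          (Relation.ReflTransGen.single ⟨A, hAmem, rfl⟩))
    · exact Relation.ReflTransGen.single ⟨τ i, ⟨i, him, bwd_other τ p hi h1 h2⟩, rfl⟩

lemma dup_false (d m : ℕ) (hmk : m ≤ d - 1) (hmd : m < d) {τ : Tup d} (h : Stage d m τ)
    {p q : Fin (d - 1)} (hpq : p ≠ q) (hpm : (p : ℕ) < m) (hqm : (q : ℕ) < m)
    (heq : τ p = τ q) : False := by
  classical
  set F : Finset (Fin (d - 1)) :=
    Finset.univ.filter (fun i : Fin (d - 1) => (i : ℕ) < m) with hF
  set T : Finset (Equiv.Perm (Fin d)) := F.image τ with hT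
  have hTswap : ∀ e ∈ T, e.IsSwap := by
    intro e he
    obtain ⟨i, hiF, rfl⟩ := Finset.mem_image.mp he
    exact h.isSwap i (Finset.mem_filter.mp hiF).2
  have hset : (↑T : Set (Equiv.Perm (Fin d))) = pimg τ m := by
    rw [hT, Finset.coe_image]
    ext e
    simp [hF, pimg, Set.mem_image, eq_comm]
  set A : Finset (Fin d) := Finset.univ.filter (fun x : Fin d => (x : ℕ) < m + 1) with hA
  have hAcard : A.card = m + 1 := card_filter_lt d (m + 1) (by omega)
  have hAreach : ∀ x ∈ A, ∀ y ∈ A, SReach (↑T) x y := by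
    intro x hx y hy
    rw [hset]
    have hx' := (Finset.mem_filter.mp hx).2
    have hy' := (Finset.mem_filter.mp hy).2
    exact h.trans x y (by omega) (by omega)
  have hbound := card_le_of_sreach_trans T hTswap A hAreach
  have hpF : p ∈ F := Finset.mem_filter.mpr ⟨Finset.mem_univ p, hpm⟩
  have hqF : q ∈ F := Finset.mem_filter.mpr ⟨Finset.mem_univ q, hqm⟩
  have himg : T = (F.erase p).image τ := by
    apply Finset.Subset.antisymm
    · intro e he
      obtain ⟨i, hiF, rfl⟩ := Finset.mem_image.mp he
      by_cases hip : i = p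
      · subst hip
        exact Finset.mem_image.mpr ⟨q, Finset.mem_erase.mpr ⟨fun hc => hpq hc.symm, hqF⟩,
          heq.symm⟩
      · exact Finset.mem_image.mpr ⟨i, Finset.mem_erase.mpr ⟨hip, hiF⟩, rfl⟩
    · intro e he
      obtain ⟨i, hi, rfl⟩ := Finset.mem_image.mp he
      exact Finset.mem_image.mpr ⟨i, Finset.mem_of_mem_erase hi, rfl⟩
  have hFcard : F.card = m := card_filter_lt (d - 1) m hmk
  have hTcard : T.card ≤ m - 1 := by
    have h1 := Finset.card_image_le (s := F.erase p) (f := τ)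
    rw [← himg] at h1
    rw [Finset.card_erase_of_mem hpF, hFcard] at h1
    exact h1
  omega

lemma mset_nonempty {d m : ℕ} {τ : Tup d} (h : Stage d m τ) (hm1 : 1 ≤ m) (hmd : m < d) :
    (mset τ m hmd).Nonempty := by
  have hreach := h.trans ⟨m, hmd⟩ ⟨0, by omega⟩ (Nat.le_refl m) (Nat.zero_le m)
  by_contra hne
  rw [Finset.not_nonempty_iff_eq_empty] at hne
  have hfixall : ∀ e ∈ pimg τ m, e ⟨m, hmd⟩ = ⟨m, hmd⟩ := by
    rintro e ⟨i, him, rfl⟩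
    by_contra hc
    have : i ∈ mset τ m hmd := mem_mset.mpr ⟨him, hc⟩
    rw [hne] at this
    exact absurd this (Finset.notMem_empty i)
  have := sreach_fix hfixall hreach
  have := congrArg Fin.val this
  simp at this
  omega

lemma shiftA (d m : ℕ) (hmk : m ≤ d - 1) (hmd : m < d) :
    ∀ (t : ℕ) (τ : Tup d), Stage d m τ → ∀ (p q : Fin (d - 1)),
      (p : ℕ) + 1 + t = (q : ℕ) → (q : ℕ) < m →
      p ∈ mset τ m hmd → q ∈ mset τ m hmd →
      (∀ j : Fin (d - 1), (p : ℕ) < (j : ℕ) → (j : ℕ) < (q : ℕ) → j ∉ mset τ m hmd) →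
      ∃ σ, Reach τ σ ∧ Stage d m σ ∧ (mset σ m hmd).card < (mset τ m hmd).card := by
  intro t
  induction t with
  | zero =>
      intro τ h p q hq hqm hp hqe hbet
      have hp1m : (p : ℕ) + 1 < m := by omega
      have hi : (p : ℕ) + 1 < d - 1 := by omega
      have hpm : (p : ℕ) < m := by omega
      have hqF : (⟨(p : ℕ) + 1, hi⟩ : Fin (d - 1)) = q := Fin.ext (by simpa using hq)
      have hpF : (⟨(p : ℕ), Nat.lt_of_succ_lt hi⟩ : Fin (d - 1)) = p := Fin.ext rfl
      obtain ⟨-, hpe⟩ := mem_mset.mp hp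
      obtain ⟨-, hqe'⟩ := mem_mset.mp hqe
      set mp : Fin d := ⟨m, hmd⟩ with hmpdef
      set a : Fin d := τ p mp with ha
      set b : Fin d := τ q mp with hb
      have hdup : τ p ≠ τ q := by
        intro hc
        exact dup_false d m hmk hmd h
          (fun hc' => by have := congrArg Fin.val hc'; omega) hpm (by omega) hc
      have hτp : τ p = Equiv.swap a mp := eq_swap_apply (h.isSwap p hpm) hpe
      have hτq : τ q = Equiv.swap b mp := eq_swap_apply (h.isSwap q (by omega)) hqe'
      have hab : a ≠ b := by
        intro hc
        apply hdup
        rw [hτp, hτq, hc]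
      set σ : Tup d := fwd τ (p : ℕ) hi with hσ
      have hσp : σ p = τ q := by
        rw [hσ, fwd_left τ _ hi rfl, hqF]
      have hσq : σ q = (τ q)⁻¹ * τ p * τ q := by
        rw [hσ, fwd_right τ _ hi (by rw [← hqF]), hqF, hpF]
      have hσqm : σ q mp = mp := by
        rw [hσq, hτp, hτq, Equiv.swap_inv, Equiv.Perm.mul_apply, Equiv.Perm.mul_apply,
          Equiv.swap_apply_right,
          Equiv.swap_apply_of_ne_of_ne (fun hc => hab hc.symm) hqe',
          Equiv.swap_apply_left]
      have hmset : mset σ m hmd = (mset τ m hmd).erase q := by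
        ext i
        rw [mem_mset, Finset.mem_erase, mem_mset]
        by_cases h1 : (i : ℕ) = (p : ℕ)
        · have hieq : i = p := Fin.ext h1
          subst hieq
          constructor
          · intro _
            refine ⟨fun hc => ?_, hpm, hpe⟩
            have := congrArg Fin.val hc; omega
          · intro _
            refine ⟨hpm, ?_⟩
            rw [hσp]; exact hqe'
        by_cases h2 : (i : ℕ) = (p : ℕ) + 1
        · have hieq : i = q := Fin.ext (by omega)
          subst hieq
          constructor
          · rintro ⟨-, hc⟩; exact absurd hσqm hc
          · rintro ⟨hc, -⟩; exact absurd rfl hc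
        · have hσi : σ i = τ i := fwd_other τ _ hi h1 h2
          rw [hσi]
          constructor
          · intro hmem'
            exact ⟨fun hc => h2 (by rw [hc]; omega), hmem'⟩
          · rintro ⟨-, hmem'⟩; exact hmem'
      refine ⟨σ, reach_fwd τ _ hi, move_stage_fwd h _ hp1m hmk, ?_⟩
      rw [hmset, Finset.card_erase_of_mem hqe]
      have : 0 < (mset τ m hmd).card := Finset.card_pos.mpr ⟨q, hqe⟩
      omega
  | succ t ih =>
      intro τ h p q hq hqm hp hqe hbet
      set j : ℕ := (p : ℕ) + 1 + t with hjdef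
      have hjq : j + 1 = (q : ℕ) := by omega
      have hjm : j + 1 < m := by omega
      have hi : j + 1 < d - 1 := by omega
      set mp : Fin d := ⟨m, hmd⟩ with hmpdef
      set jF : Fin (d - 1) := ⟨j, Nat.lt_of_succ_lt hi⟩ with hjF
      have hqF : (⟨j + 1, hi⟩ : Fin (d - 1)) = q := Fin.ext (by simpa using hjq)
      have hjnot : jF ∉ mset τ m hmd := hbet jF (by simp [hjF]; omega) (by simp [hjF]; omega)
      have hjfix : τ jF mp = mp := by
        by_contra hc
        exact hjnot (mem_mset.mpr ⟨by simp [hjF]; omega, hc⟩)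
      obtain ⟨-, hqe'⟩ := mem_mset.mp hqe
      set σ : Tup d := bwd τ j hi with hσ
      have hσj : σ jF = τ jF * τ q * (τ jF)⁻¹ := by
        rw [hσ, bwd_left τ j hi rfl, hqF]
      have hσq : σ q = τ jF := by
        rw [hσ, bwd_right τ j hi (by rw [← hqF])]
      have hτjinv : (τ jF)⁻¹ mp = mp := by
        conv_lhs => rw [← hjfix]
        rw [Equiv.Perm.inv_apply_self]
      have hσjm : σ jF mp ≠ mp := by
        rw [hσj, Equiv.Perm.mul_apply, Equiv.Perm.mul_apply, hτjinv]
        intro hc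
        exact hqe' ((τ jF).injective (hc.trans hjfix.symm))
      have hσqm : σ q mp = mp := by rw [hσq, hjfix]
      have hmset : mset σ m hmd = insert jF ((mset τ m hmd).erase q) := by
        ext i
        rw [mem_mset, Finset.mem_insert, Finset.mem_erase, mem_mset]
        by_cases h1 : (i : ℕ) = j
        · have hieq : i = jF := Fin.ext h1
          subst hieq
          constructor
          · intro _; exact Or.inl rfl
          · intro _; exact ⟨by simp [hjF]; omega, hσjm⟩
        by_cases h2 : (i : ℕ) = j + 1
        · have hieq : i = q := Fin.ext (by omega)
          subst hieq
          constructor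
          · rintro ⟨-, hc⟩; exact absurd hσqm hc
          · rintro (hc | ⟨hc, -⟩)
            · have := congrArg Fin.val hc; simp [hjF] at this; omega
            · exact absurd rfl hc
        · have hσi : σ i = τ i := bwd_other τ _ hi h1 h2
          rw [hσi]
          constructor
          · intro hmem'
            refine Or.inr ⟨fun hc => h2 (by rw [hc]; omega), hmem'⟩
          · rintro (hc | ⟨-, hmem'⟩)
            · exact absurd (congrArg Fin.val hc) h1
            · exact hmem'
      have hcardeq : (mset σ m hmd).card = (mset τ m hmd).card := by
        rw [hmset, Finset.card_insert_of_notMem (fun hc => hjnot (Finset.mem_of_mem_erase hc)),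
          Finset.card_erase_of_mem hqe]
        have : 0 < (mset τ m hmd).card := Finset.card_pos.mpr ⟨q, hqe⟩
        omega
      have hstage' : Stage d m σ := move_stage_bwd h j hjm hmk
      have hpq' : p ≠ q := fun hc => by have := congrArg Fin.val hc; omega
      have hp' : p ∈ mset σ m hmd := by
        rw [hmset]
        exact Finset.mem_insert_of_mem (Finset.mem_erase.mpr ⟨hpq', hp⟩)
      have hj' : jF ∈ mset σ m hmd := by rw [hmset]; exact Finset.mem_insert_self _ _
      have hbet' : ∀ i : Fin (d - 1), (p : ℕ) < (i : ℕ) → (i : ℕ) < (jF : ℕ) →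
          i ∉ mset σ m hmd := by
        intro i hpi hij hc
        rw [hmset, Finset.mem_insert] at hc
        simp only [hjF] at hij
        rcases hc with hc | hc
        · have := congrArg Fin.val hc; simp [hjF] at this; omega
        · exact hbet i hpi (by omega) (Finset.mem_of_mem_erase hc)
      obtain ⟨σ', hr', hs', hcard'⟩ := ih σ hstage' p jF (by simp [hjF]; omega) (by simp [hjF]; omega)
        hp' hj' hbet'
      exact ⟨σ', (reach_bwd τ j hi).trans hr', hs', by omega⟩

lemma phaseA (d m : ℕ) (hmk : m ≤ d - 1) (hmd : m < d) :
    ∀ (n : ℕ) (τ : Tup d), Stage d m τ → (mset τ m hmd).card ≤ n →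
      ∃ σ, Reach τ σ ∧ Stage d m σ ∧ (mset σ m hmd).card ≤ 1 := by
  intro n
  induction n with
  | zero => intro τ h hcard; exact ⟨τ, Relation.ReflTransGen.refl, h, by omega⟩
  | succ n ih =>
      intro τ h hcard
      by_cases hc : (mset τ m hmd).card ≤ 1
      · exact ⟨τ, Relation.ReflTransGen.refl, h, hc⟩
      push_neg at hc
      have hne : (mset τ m hmd).Nonempty := Finset.card_pos.mp (by omega)
      set p := (mset τ m hmd).min' hne with hp
      have hpmem : p ∈ mset τ m hmd := Finset.min'_mem _ _
      have hexne : ((mset τ m hmd).erase p).Nonempty := by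
        rw [← Finset.card_pos, Finset.card_erase_of_mem hpmem]; omega
      set q := ((mset τ m hmd).erase p).min' hexne with hq
      have hqmem' : q ∈ (mset τ m hmd).erase p := Finset.min'_mem _ _
      have hqmem : q ∈ mset τ m hmd := Finset.mem_of_mem_erase hqmem'
      have hqp : q ≠ p := Finset.ne_of_mem_erase hqmem'
      have hpq : (p : ℕ) < (q : ℕ) := by
        have h1 : p ≤ q := Finset.min'_le _ _ hqmem
        exact lt_of_le_of_ne h1 (fun hc' => hqp (Fin.ext hc'.symm))
      have hbet : ∀ j : Fin (d - 1), (p : ℕ) < (j : ℕ) → (j : ℕ) < (q : ℕ) →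
          j ∉ mset τ m hmd := by
        intro j h1 h2 hjmem
        have hjp : j ≠ p := fun hc' => by rw [hc'] at h1; omega
        have h3 : q ≤ j := Finset.min'_le _ _ (Finset.mem_erase.mpr ⟨hjp, hjmem⟩)
        have h4 : (q : ℕ) ≤ (j : ℕ) := h3
        omega
      have hqm : (q : ℕ) < m := (mem_mset.mp hqmem).1
      obtain ⟨σ, hr, hs, hcard'⟩ := shiftA d m hmk hmd ((q : ℕ) - (p : ℕ) - 1) τ h p q
        (by omega) hqm hpmem hqmem hbet
      obtain ⟨σ', hr', hs', hcard''⟩ := ih σ hs (by omega)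
      exact ⟨σ', hr.trans hr', hs', hcard''⟩

lemma phaseB (d m : ℕ) (hmk : m ≤ d - 1) (hmd : m < d) :
    ∀ (r : ℕ) (τ : Tup d), Stage d m τ → ∀ p : Fin (d - 1), (p : ℕ) + 1 + r = m →
      mset τ m hmd = {p} →
      ∃ σ, Reach τ σ ∧ Stage d m σ ∧
        ∃ p' : Fin (d - 1), (p' : ℕ) + 1 = m ∧ mset σ m hmd = {p'} := by
  intro r
  induction r with
  | zero =>
      intro τ h p hp hms
      exact ⟨τ, Relation.ReflTransGen.refl, h, p, by omega, hms⟩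
  | succ r ih =>
      intro τ h p hp hms
      have hp1m : (p : ℕ) + 1 < m := by omega
      have hi : (p : ℕ) + 1 < d - 1 := by omega
      set mp : Fin d := ⟨m, hmd⟩ with hmpdef
      set p1 : Fin (d - 1) := ⟨(p : ℕ) + 1, hi⟩ with hp1def
      have hpF : (⟨(p : ℕ), Nat.lt_of_succ_lt hi⟩ : Fin (d - 1)) = p := Fin.ext rfl
      have hpmem : p ∈ mset τ m hmd := by rw [hms]; exact Finset.mem_singleton_self p
      obtain ⟨hpm, hpe⟩ := mem_mset.mp hpmem
      have hp1not : τ p1 mp = mp := by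
        by_contra hc
        have hmem : p1 ∈ mset τ m hmd := mem_mset.mpr ⟨hp1m, hc⟩
        rw [hms, Finset.mem_singleton] at hmem
        have := congrArg Fin.val hmem
        simp [hp1def] at this
      set σ : Tup d := fwd τ (p : ℕ) hi with hσ
      have hσp : σ p = τ p1 := by rw [hσ, fwd_left τ _ hi rfl]
      have hσp1 : σ p1 = (τ p1)⁻¹ * τ p * τ p1 := by
        rw [hσ, fwd_right τ _ hi rfl, hpF]
      have hσp1e : σ p1 mp ≠ mp := by
        rw [hσp1, Equiv.Perm.mul_apply, Equiv.Perm.mul_apply, hp1not]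
        intro hc
        apply hpe
        have := congrArg (τ p1) hc
        rwa [Equiv.Perm.apply_inv_self, hp1not] at this
      have hmset : mset σ m hmd = {p1} := by
        ext i
        rw [mem_mset, Finset.mem_singleton]
        by_cases h1 : (i : ℕ) = (p : ℕ)
        · have hieq : i = p := Fin.ext h1
          subst hieq
          constructor
          · rintro ⟨-, hc⟩
            exact absurd hp1not (by rwa [hσp] at hc)
          · intro hc
            have := congrArg Fin.val hc
            simp [hp1def] at this
        by_cases h2 : (i : ℕ) = (p : ℕ) + 1
        · have hieq : i = p1 := Fin.ext h2
          subst hieq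
          exact ⟨fun _ => rfl, fun _ => ⟨hp1m, hσp1e⟩⟩
        · have hσi : σ i = τ i := fwd_other τ _ hi h1 h2
          rw [hσi]
          constructor
          · intro hmem'
            have hmem2 : i ∈ mset τ m hmd := mem_mset.mpr hmem'
            rw [hms, Finset.mem_singleton] at hmem2
            exact absurd (congrArg Fin.val hmem2) h1
          · intro hc
            exact absurd (congrArg Fin.val hc) h2
      obtain ⟨σ', hr', hs', res⟩ := ih σ (move_stage_fwd h _ hp1m hmk) p1
        (show (p : ℕ) + 1 + 1 + r = m by omega) hmset
      exact ⟨σ', (reach_fwd τ _ hi).trans hr', hs', res⟩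

lemma phaseC (d m : ℕ) (hm1 : 1 ≤ m) (hmk : m ≤ d - 1) (hmd : m < d) (τ : Tup d)
    (h : Stage d m τ) (p : Fin (d - 1)) (hp1 : (p : ℕ) + 1 = m)
    (hms : mset τ m hmd = {p}) :
    ∃ σ, Reach τ σ ∧ Stage d (m - 1) σ := by
  set mp : Fin d := ⟨m, hmd⟩ with hmpdef
  have hpd : (p : ℕ) < d := by omega
  set am1 : Fin d := ⟨(p : ℕ), hpd⟩ with ham1
  have hmpval : (mp : ℕ) = m := rfl
  have ham1val : (am1 : ℕ) = (p : ℕ) := rfl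
  have hpmem : p ∈ mset τ m hmd := by rw [hms]; exact Finset.mem_singleton_self p
  obtain ⟨hpm, hpe⟩ := mem_mset.mp hpmem
  set a : Fin d := τ p mp with hadef
  have hτp : τ p = Equiv.swap a mp := eq_swap_apply (h.isSwap p hpm) hpe
  have haval : (a : ℕ) < m := by
    rcases Nat.lt_or_ge (a : ℕ) m with h1 | h2
    · exact h1
    rcases Nat.lt_or_ge m (a : ℕ) with h1 | h2'
    · have hfix := h.fix p hpm a h1
      rw [hτp, Equiv.swap_apply_left] at hfix
      have := congrArg Fin.val hfix
      simp [hmpdef] at this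
      omega
    · have hame : a = mp := Fin.ext (by omega)
      exact absurd (hadef ▸ hame) hpe
  have hfixτ : ∀ i : Fin (d - 1), (i : ℕ) < m → i ≠ p → τ i mp = mp := by
    intro i him hip
    by_contra hc
    have hmem : i ∈ mset τ m hmd := mem_mset.mpr ⟨him, hc⟩
    rw [hms, Finset.mem_singleton] at hmem
    exact hip hmem
  set g : Equiv.Perm (Fin d) := Equiv.swap a am1 with hgdef
  have hginv : g⁻¹ = g := Equiv.swap_inv a am1
  have hgfix : ∀ x : Fin d, m ≤ (x : ℕ) → g x = x := by
    intro x hx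
    apply Equiv.swap_apply_of_ne_of_ne
    · intro hc; have := congrArg Fin.val hc; omega
    · intro hc; have := congrArg Fin.val hc; simp [ham1] at this; omega
  have hga : g a = am1 := Equiv.swap_apply_left a am1
  have hgm : g mp = mp := hgfix mp (Nat.le_refl m)
  refine ⟨fun j => g⁻¹ * τ j * g, reach_conj τ g, ?_, ?_, ?_, ?_⟩
  · intro i hi
    exact isSwap_conj (h.isSwap i (by omega))
  · intro i hi x hx
    have him : (i : ℕ) < m := by omega
    have hip : i ≠ p := fun hc => by have := congrArg Fin.val hc; omega
    have hgx : g x = x := hgfix x (by omega)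
    have hτix : τ i x = x := by
      rcases Nat.lt_or_ge m (x : ℕ) with h1 | h2
      · exact h.fix i him x h1
      · have hxm : x = mp := Fin.ext (by omega)
        rw [hxm]; exact hfixτ i him hip
    show (g⁻¹ * τ i * g) x = x
    rw [Equiv.Perm.mul_apply, Equiv.Perm.mul_apply, hgx, hτix, hginv, hgx]
  · intro i hi
    rcases Nat.lt_or_ge (i : ℕ) m with h1 | h2
    · have hieq : i = p := Fin.ext (by omega)
      subst hieq
      show g⁻¹ * τ i * g = _
      have hkey : g⁻¹ * Equiv.swap a mp * g = Equiv.swap (g⁻¹ a) (g⁻¹ mp) := by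
        rw [Equiv.swap_apply_apply g⁻¹ a mp, inv_inv]
      rw [hτp, hkey, hginv, hga, hgm]
      have e1 : am1 = (⟨(i : ℕ), Nat.lt_of_lt_of_le i.isLt (Nat.sub_le d 1)⟩ : Fin d) :=
        Fin.ext rfl
      have e2 : mp = (⟨(i : ℕ) + 1, by have := i.isLt; omega⟩ : Fin d) :=
        Fin.ext (by simp [hmpdef]; omega)
      rw [e1, e2]
    · have hsuf := h.suff i h2
      show g⁻¹ * τ i * g = _
      have hkey : ∀ u v : Fin d, g⁻¹ * Equiv.swap u v * g = Equiv.swap (g⁻¹ u) (g⁻¹ v) := by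
        intro u v
        rw [Equiv.swap_apply_apply g⁻¹ u v, inv_inv]
      rw [hsuf, hkey, hginv, hgfix _ (by simpa using by omega), hgfix _ (by simpa using by omega)]
  · intro x y hx hy
    have hsplit : pimg τ m = insert (Equiv.swap a mp) (pimg τ (m - 1)) := by
      ext e
      constructor
      · rintro ⟨i, him, rfl⟩
        have him' : (i : ℕ) < m := him
        rcases Nat.lt_or_ge (i : ℕ) (m - 1) with h1 | h2
        · exact Set.mem_insert_of_mem _ ⟨i, h1, rfl⟩
        · have hieq : i = p := Fin.ext (by omega)
          subst hieq
          rw [hτp]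
          exact Set.mem_insert _ _
      · rintro (rfl | ⟨i, him, rfl⟩)
        · exact ⟨p, hpm, hτp⟩
        · have him' : (i : ℕ) < m - 1 := him
          exact ⟨i, (by omega : (i : ℕ) < m), rfl⟩
    have hfixS : ∀ f ∈ pimg τ (m - 1), f mp = mp := by
      rintro f ⟨i, him, rfl⟩
      have him' : (i : ℕ) < m - 1 := him
      exact hfixτ i (by omega) (fun hc => by have := congrArg Fin.val hc; omega)
    have hamp : a ≠ mp := fun hc => by have := congrArg Fin.val hc; simp [hmpdef] at this; omega
    have hgbound : ∀ z : Fin d, (z : ℕ) ≤ m - 1 → ((g z : Fin d) : ℕ) ≤ m - 1 := by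
      intro z hz
      by_cases h1 : z = a
      · subst h1; rw [hga]; show (p : ℕ) ≤ m - 1; omega
      by_cases h2 : z = am1
      · subst h2
        rw [hgdef, Equiv.swap_apply_right]
        omega
      · rw [hgdef, Equiv.swap_apply_of_ne_of_ne h1 h2]
        exact hz
    have hgx' : ((g x : Fin d) : ℕ) ≤ m - 1 := hgbound x hx
    have hgy' : ((g y : Fin d) : ℕ) ≤ m - 1 := hgbound y hy
    have hold : SReach (pimg τ m) (g x) (g y) := h.trans _ _ (by omega) (by omega)
    rw [hsplit] at hold
    have hspliced := sreach_splice hamp hfixS hold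
    have hgxne : ¬(g x = mp) := fun hc => by
      have := congrArg Fin.val hc; simp [hmpdef] at this; omega
    have hgyne : ¬(g y = mp) := fun hc => by
      have := congrArg Fin.val hc; simp [hmpdef] at this; omega
    rw [if_neg hgxne, if_neg hgyne] at hspliced
    have hconj := sreach_conj g hspliced
    have e1 : g⁻¹ (g x) = x := Equiv.Perm.inv_apply_self g x
    have e2 : g⁻¹ (g y) = y := Equiv.Perm.inv_apply_self g y
    rw [e1, e2] at hconj
    have himg : (fun f => g⁻¹ * f * g) '' pimg τ (m - 1)
        = pimg (fun j => g⁻¹ * τ j * g) (m - 1) := by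
      rw [pimg, pimg]
      exact Set.image_image _ _ _
    rwa [himg] at hconj

lemma stage_zero_eq_std {τ : Tup d} (h : Stage d 0 τ) : τ = std d := by
  funext i
  exact h.suff i (Nat.zero_le _)

lemma descend (d : ℕ) : ∀ m : ℕ, m ≤ d - 1 → ∀ τ : Tup d, Stage d m τ → Reach τ (std d) := by
  intro m
  induction m with
  | zero =>
      intro _ τ h
      rw [stage_zero_eq_std h]
      exact Relation.ReflTransGen.refl
  | succ m ih =>
      intro hmk τ h
      have hmd : m + 1 < d := by omega
      have hm1 : 1 ≤ m + 1 := by omega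
      obtain ⟨σ1, hr1, hs1, hc1⟩ := phaseA d (m + 1) hmk hmd (mset τ (m + 1) hmd).card τ h
        (Nat.le_refl _)
      have hne : (mset σ1 (m + 1) hmd).Nonempty := mset_nonempty hs1 hm1 hmd
      have hcard1 : (mset σ1 (m + 1) hmd).card = 1 := by
        have := Finset.card_pos.mpr hne; omega
      obtain ⟨p, hp⟩ := Finset.card_eq_one.mp hcard1
      have hppm : (p : ℕ) < m + 1 :=
        (mem_mset.mp (by rw [hp]; exact Finset.mem_singleton_self p)).1
      obtain ⟨σ2, hr2, hs2, p', hp'1, hp'⟩ := phaseB d (m + 1) hmk hmd (m - (p : ℕ)) σ1 hs1 p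
        (by omega) hp
      obtain ⟨σ3, hr3, hs3⟩ := phaseC d (m + 1) hm1 hmk hmd σ2 hs2 p' hp'1 hp'
      have hs3' : Stage d m σ3 := by rwa [Nat.add_sub_cancel] at hs3
      exact hr1.trans (hr2.trans (hr3.trans (ih (by omega) σ3 hs3')))

end HurwitzAux

/-- combinatorial form of: two polynomials in general position of
the same degree lie in the same Hurwitz class: any two sequences of `d - 1`
transpositions in `S_d`, each generating a transitive subgroup and each with
product a `d`-cycle, are related by a finite sequence of Hurwitz (braid) moves,
their inverses, and simultaneous conjugations. -/
theorem general_position_hurwitz_classification (d : ℕ) (hd : 1 ≤ d)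
    (τ σ : Fin (d - 1) → Equiv.Perm (Fin d))
    (hτswap : ∀ i, (τ i).IsSwap) (hσswap : ∀ i, (σ i).IsSwap)
    (hτtrans : ∀ x y : Fin d, ∃ g ∈ Subgroup.closure (Set.range τ), g x = y)
    (hσtrans : ∀ x y : Fin d, ∃ g ∈ Subgroup.closure (Set.range σ), g x = y)
    (hτcycle : ((List.ofFn τ).prod).IsCycle ∧
      ((List.ofFn τ).prod).support.card = d)
    (hσcycle : ((List.ofFn σ).prod).IsCycle ∧
      ((List.ofFn σ).prod).support.card = d) :
    Relation.ReflTransGen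
      (fun a b : Fin (d - 1) → Equiv.Perm (Fin d) =>
        HurwitzMove a b ∨ HurwitzMove b a ∨ ConjMove a b) τ σ := by
  classical
  by_cases hd2 : d ≤ 1
  · have hq : τ = σ := funext fun i => absurd i.isLt (by omega)
    rw [hq]
  · push_neg at hd2
    have init : ∀ ρ : Fin (d - 1) → Equiv.Perm (Fin d), (∀ i, (ρ i).IsSwap) →
        (∀ x y : Fin d, ∃ g ∈ Subgroup.closure (Set.range ρ), g x = y) →
        HurwitzAux.Stage d (d - 1) ρ := by
      intro ρ hsw htr
      refine ⟨fun i _ => hsw i, ?_, ?_, ?_⟩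
      · intro i _ x hx
        exact absurd hx (by have := x.isLt; omega)
      · intro i hi
        exact absurd hi (by have := i.isLt; omega)
      · intro x y _ _
        have hrange : HurwitzAux.pimg ρ (d - 1) = Set.range ρ := by
          ext e
          constructor
          · rintro ⟨i, -, rfl⟩; exact ⟨i, rfl⟩
          · rintro ⟨i, rfl⟩; exact ⟨i, i.isLt, rfl⟩
        rw [HurwitzAux.SReach, hrange]
        obtain ⟨g, hg, hgx⟩ := htr x y
        have hres := HurwitzAux.sreach_of_mem_closure
          (fun e he => by obtain ⟨i, rfl⟩ := he; exact hsw i) hg x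
        rw [hgx] at hres
        exact hres
    have h1 := HurwitzAux.descend d (d - 1) le_rfl τ (init τ hτswap hτtrans)
    have h2 := HurwitzAux.descend d (d - 1) le_rfl σ (init σ hσswap hσtrans)
    exact h1.trans (HurwitzAux.reach_symm h2)
end
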